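/- Let k ≥ 3 and for each m with 0 ≤ m ≤ P_k − 1 let S_k^{(m)} be the set of natural numbers N with 5 + m·∏_{i=1}^{k−1} P_i ≤ N ≤ 4 + (m+1)·∏_{i=1}^{k−1} P_i. Then every subset S_k^{(m)} contains at least ∏_{i=1}^{k−1} (P_i − 1) − ∏_{i=1}^{k−2} (P_i − 1) natural numbers coprime to ∏_{i=1}^{k} P_i. -/

import Mathlib

/-
A block of `Q = ∏_{i<k} P_i` consecutive integers is a complete residue system mod `Q`, so it
contains exactly `φ(Q)` integers coprime to `Q`. Such an integer fails to be coprime to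
`Q · P_k` only if it is a multiple of `P_k` coprime to `Q' = ∏_{i<k-1} P_i`. Since
`Q = Q' · P_{k-1} ≤ Q' · P_k`, dividing by `P_k` sends these multiples injectively into a block of
`Q'` consecutive integers, so there are at most `φ(Q')` of them.
-/

/-- `P i` is the `i`-th prime number (1-indexed): `P 1 = 2`, `P 2 = 3`, `P 3 = 5`, ... -/
noncomputable def P (i : ℕ) : ℕ := Nat.nth Nat.Prime (i - 1)

/-- The `k`-th primorial, `∏_{i=1}^{k} P_i`. -/
noncomputable def primor (k : ℕ) : ℕ := ∏ i ∈ Finset.Icc 1 k, P i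

open Finset
open scoped Nat

namespace Nat

theorem card_filter_dvd_coprime_Ico_le {p q L : ℕ} (hp : 0 < p) (hL : L ≤ p * q) (a : ℕ) :
    #{N ∈ Ico a (a + L) | p ∣ N ∧ N.Coprime q} ≤ φ q := by
  set t₀ := a ⌈/⌉ p
  have hmem : {N ∈ Ico a (a + L) | p ∣ N ∧ N.Coprime q} ⊆
      image (p * ·) {t ∈ Ico t₀ (t₀ + q) | q.Coprime t} := by
    intro N hN
    simp only [mem_filter, mem_Ico] at hN
    obtain ⟨⟨haN, hNL⟩, ⟨t, rfl⟩, hcop⟩ := hN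
    have ht₀ : a ≤ p * t₀ := (ceilDiv_le_iff_le_mul hp).1 le_rfl
    have hlt : p * t < p * (t₀ + q) := by rw [mul_add]; omega
    refine mem_image.2 ⟨t, mem_filter.2 ⟨mem_Ico.2 ⟨?_, ?_⟩, ?_⟩, rfl⟩
    · exact (ceilDiv_le_iff_le_mul hp).2 haN
    · exact Nat.lt_of_mul_lt_mul_left hlt
    · exact (Nat.Coprime.coprime_dvd_left (dvd_mul_left t p) hcop).symm
  calc #{N ∈ Ico a (a + L) | p ∣ N ∧ N.Coprime q}
      ≤ #{t ∈ Ico t₀ (t₀ + q) | q.Coprime t} := (card_le_card hmem).trans Finset.card_image_le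
    _ = φ q := filter_coprime_Ico_eq_totient q t₀

theorem totient_sub_totient_le_card_filter_coprime_mul {p Q q : ℕ} (hp : p.Prime) (hqQ : q ∣ Q)
    (hQ : Q ≤ p * q) (a : ℕ) :
    φ Q - φ q ≤ #{N ∈ Ico a (a + Q) | N.Coprime (Q * p)} := by
  have hsplit : {N ∈ Ico a (a + Q) | Q.Coprime N} ⊆
      {N ∈ Ico a (a + Q) | N.Coprime (Q * p)} ∪ {N ∈ Ico a (a + Q) | p ∣ N ∧ N.Coprime q} := by
    intro N hN
    simp only [mem_union, mem_filter] at hN ⊢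
    by_cases hpN : p ∣ N
    · exact Or.inr ⟨hN.1, hpN, hN.2.symm.coprime_dvd_right hqQ⟩
    · exact Or.inl ⟨hN.1, hN.2.symm.mul_right (hp.coprime_iff_not_dvd.2 hpN).symm⟩
  have hcover := (card_le_card hsplit).trans (card_union_le _ _)
  rw [filter_coprime_Ico_eq_totient] at hcover
  have hmultiples := card_filter_dvd_coprime_Ico_le hp.pos hQ a
  omega

end Nat

theorem prime_P (i : ℕ) : (P i).Prime := Nat.prime_nth_prime _

theorem P_mono : Monotone P := fun _ _ hij =>
  (Nat.nth_le_nth Nat.infinite_setOfPred_prime).2 (by omega)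

theorem P_lt_P {i j : ℕ} (hi : 1 ≤ i) (hij : i < j) : P i < P j :=
  (Nat.nth_lt_nth Nat.infinite_setOfPred_prime).2 (by omega)

theorem primor_succ (k : ℕ) : primor (k + 1) = primor k * P (k + 1) :=
  prod_Icc_succ_top (by omega) P

theorem coprime_primor_P_succ (k : ℕ) : (primor k).Coprime (P (k + 1)) := by
  refine Nat.Coprime.prod_left fun i hi => (Nat.coprime_primes (prime_P i) (prime_P _)).2 ?_
  exact (P_lt_P (mem_Icc.1 hi).1 (by grind)).ne

theorem totient_primor (k : ℕ) : φ (primor k) = ∏ i ∈ Icc 1 k, (P i - 1) := by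
  induction k with
  | zero => simp [primor]
  | succ k ih =>
    rw [primor_succ, Nat.totient_mul (coprime_primor_P_succ k), ih,
      Nat.totient_prime (prime_P _), prod_Icc_succ_top (by omega)]

open scoped Classical in
theorem prospective_primes_in_each_block_general (k : ℕ)
    (m : ℕ) :
    ((Finset.Icc (5 + m * primor (k - 1)) (4 + (m + 1) * primor (k - 1))).filter
      (fun N => Nat.Coprime N (primor k))).card
      ≥ ∏ i ∈ Finset.Icc 1 (k - 1), (P i - 1)
        - ∏ i ∈ Finset.Icc 1 (k - 2), (P i - 1) := by
  rcases Nat.lt_or_ge k 2 with hk | hk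
  · simp [show k - 2 = k - 1 by omega]
  obtain ⟨j, rfl⟩ := Nat.exists_eq_add_of_le' hk
  have hblock : Icc (5 + m * primor (j + 1)) (4 + (m + 1) * primor (j + 1)) =
      Ico (5 + m * primor (j + 1)) (5 + m * primor (j + 1) + primor (j + 1)) := by
    rw [← Ico_add_one_right_eq_Icc, add_one_mul]; congr 1; omega
  simp only [Nat.add_sub_cancel, show j + 2 - 1 = j + 1 by omega]
  rw [hblock, ← totient_primor, ← totient_primor, primor_succ (j + 1)]
  refine Nat.totient_sub_totient_le_card_filter_coprime_mul (prime_P _) ⟨_, primor_succ j⟩ ?_ _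
  rw [primor_succ, mul_comm]
  exact Nat.mul_le_mul_right _ (P_mono (by omega))

open scoped Classical in
/-- For `k ≥ 3`, every block
`S_k^{(m)} = [5 + m·∏_{i=1}^{k-1} P_i, 4 + (m+1)·∏_{i=1}^{k-1} P_i]`, `0 ≤ m ≤ P_k - 1`,
contains at least `∏_{i=1}^{k-1}(P_i - 1) - ∏_{i=1}^{k-2}(P_i - 1)` naturals coprime
to `∏_{i=1}^k P_i`. -/
theorem prospective_primes_in_each_block (k : ℕ) (hk : 3 ≤ k)
    (m : ℕ) (hm : m ≤ P k - 1) :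
    ((Finset.Icc (5 + m * primor (k - 1)) (4 + (m + 1) * primor (k - 1))).filter
      (fun N => Nat.Coprime N (primor k))).card
      ≥ ∏ i ∈ Finset.Icc 1 (k - 1), (P i - 1)
        - ∏ i ∈ Finset.Icc 1 (k - 2), (P i - 1) :=
  prospective_primes_in_each_block_general k m
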